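/- Let μ : X → 𝔭 be a continuous K-equivariant map (K a compact group acting on X and orthogonally on 𝔭). For x ∈ X, the following are equivalent: (a) K·x is open in μ⁻¹(K·μ(x)); (b) the orbit K_{μ(x)}·x of the stabilizer K_{μ(x)} = {k ∈ K : k·μ(x) = μ(x)} is open in the fiber μ⁻¹(μ(x)). -/

import Mathlib

/-!
(a) ⇒ (b) is restriction to the fiber, because `K • x ∩ μ⁻¹(μ x) = K_{μ x} • x`.
For (b) ⇒ (a), pick `U` open in `X` cutting `K_{μ x} • x` out of the fiber. By the tube lemma
for the compact group `K`, the set `V` of those `y` with `k⁻¹ • y ∈ U` whenever `μ y = k • μ x`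
is open. It contains `x`, each of its points in `μ⁻¹(K • μ x)` is moved into the fiber inside `U`,
hence lies in `K • x`, and the translates of `V` cut `K • x` out of `μ⁻¹(K • μ x)`.
-/

open MulAction Set

open scoped Pointwise

theorem isOpen_setOf_forall_of_compactSpace {K X : Type*} [TopologicalSpace K] [CompactSpace K]
    [TopologicalSpace X] {s : Set (K × X)} (hs : IsOpen s) : IsOpen {x | ∀ k, (k, x) ∈ s} := by
  have : {x | ∀ k, (k, x) ∈ s} = (Prod.snd '' sᶜ)ᶜ := by
    ext x
    simp
  rw [this]
  exact (isClosedMap_snd_of_compactSpace _ hs.isClosed_compl).isOpen_compl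

theorem isOpen_preimage_val_orbit_of_inter_subset {K X : Type*} [Group K] [MulAction K X]
    [TopologicalSpace X] [ContinuousConstSMul K X] {S V : Set X}
    (hS : ∀ (g : K), ∀ y ∈ S, g • y ∈ S) (hV : IsOpen V) {x : X} (hxV : x ∈ V)
    (hVS : V ∩ S ⊆ orbit K x) : IsOpen (Subtype.val ⁻¹' orbit K x : Set S) := by
  refine isOpen_induced_iff.2 ⟨⋃ g : K, g • V, isOpen_iUnion fun g ↦ hV.smul g, ?_⟩
  ext ⟨y, hy⟩
  simp only [mem_preimage, mem_iUnion]
  constructor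
  · rintro ⟨g, hg⟩
    rw [mem_smul_set_iff_inv_smul_mem] at hg
    simpa using mem_orbit_of_mem_orbit g (hVS ⟨hg, hS g⁻¹ y hy⟩)
  · rintro ⟨g, rfl⟩
    exact ⟨g, smul_mem_smul_set hxV⟩

section Equivariant

variable {K X P : Type*} [Group K] [MulAction K X] [MulAction K P] {μ : X → P}

theorem orbit_inter_fiber_eq_orbit_stabilizer (hμ : ∀ (k : K) (x : X), μ (k • x) = k • μ x)
    (x : X) : orbit K x ∩ μ ⁻¹' {μ x} = orbit (stabilizer K (μ x)) x := by
  ext y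
  constructor
  · rintro ⟨⟨k, rfl⟩, hk⟩
    exact ⟨⟨k, by simpa [hμ] using hk⟩, rfl⟩
  · rintro ⟨⟨k, hk⟩, rfl⟩
    exact ⟨⟨k, rfl⟩, by simpa [hμ] using hk⟩

theorem smul_mem_preimage_orbit (hμ : ∀ (k : K) (x : X), μ (k • x) = k • μ x) (p : P)
    (g : K) (y : X) (hy : y ∈ μ ⁻¹' orbit K p) : g • y ∈ μ ⁻¹' orbit K p := by
  simpa [mem_preimage, hμ] using mem_orbit_of_mem_orbit g hy

theorem isOpen_setOf_forall_eq_smul_imp_inv_smul_mem [TopologicalSpace K] [ContinuousInv K]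
    [CompactSpace K] [TopologicalSpace X] [ContinuousSMul K X] [TopologicalSpace P] [T2Space P]
    [ContinuousSMul K P] (hμ : Continuous μ) (p : P) {U : Set X}
    (hU : IsOpen U) : IsOpen {y | ∀ k : K, μ y = k • p → k⁻¹ • y ∈ U} := by
  refine isOpen_setOf_forall_of_compactSpace
    (s := {q : K × X | μ q.2 = q.1 • p → q.1⁻¹ • q.2 ∈ U}) ?_
  have hclosed : IsClosed {q : K × X | μ q.2 = q.1 • p} :=
    isClosed_eq (hμ.comp continuous_snd) (continuous_fst.smul continuous_const)
  have hopen : IsOpen {q : K × X | q.1⁻¹ • q.2 ∈ U} :=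
    hU.preimage (continuous_fst.inv.smul continuous_snd)
  convert hclosed.isOpen_compl.union hopen using 1
  ext
  exact imp_iff_not_or

end Equivariant

/-- Let `K` be a compact topological group acting continuously on spaces `X` and `𝔭`, and let
`μ : X → 𝔭` be a continuous `K`-equivariant map.  For `x ∈ X` the following are equivalent:
(a) `K • x` is open in `μ⁻¹(K • μ(x))`;
(b) the orbit of the stabilizer `K_{μ(x)}` through `x` is open in the fiber `μ⁻¹(μ(x))`. -/
theorem orbit_open_in_saturation_iff_stabilizer_orbit_open_in_fiber
    {K : Type*} [Group K] [TopologicalSpace K] [IsTopologicalGroup K] [CompactSpace K]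
    {X : Type*} [TopologicalSpace X] [MulAction K X] [ContinuousSMul K X]
    {P : Type*} [TopologicalSpace P] [T2Space P] [MulAction K P] [ContinuousSMul K P]
    (μ : X → P) (hcont : Continuous μ) (hequiv : ∀ (k : K) (x : X), μ (k • x) = k • μ x)
    (x : X) :
    IsOpen (Subtype.val ⁻¹' (MulAction.orbit K x) :
        Set (μ ⁻¹' (MulAction.orbit K (μ x)))) ↔
      IsOpen (Subtype.val ⁻¹' (MulAction.orbit (MulAction.stabilizer K (μ x)) x) :
        Set (μ ⁻¹' {μ x})) := by
  have hFS : μ ⁻¹' {μ x} ⊆ μ ⁻¹' orbit K (μ x) := fun y hy ↦ by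
    simp only [mem_preimage, mem_singleton_iff.1 hy, mem_orbit_self]
  have hfiber : (Subtype.val ⁻¹' orbit (stabilizer K (μ x)) x : Set (μ ⁻¹' {μ x})) =
      Subtype.val ⁻¹' orbit K x := by
    rw [← orbit_inter_fiber_eq_orbit_stabilizer hequiv, Subtype.preimage_coe_inter_self]
  rw [hfiber]
  refine ⟨fun h ↦ h.preimage (continuous_inclusion hFS), fun h ↦ ?_⟩
  obtain ⟨U, hU, hUF⟩ := isOpen_induced_iff.1 h
  rw [Subtype.preimage_coe_eq_preimage_coe_iff] at hUF
  refine isOpen_preimage_val_orbit_of_inter_subset (smul_mem_preimage_orbit hequiv _)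
    (isOpen_setOf_forall_eq_smul_imp_inv_smul_mem (K := K) hcont (μ x) hU) ?_ ?_
  · intro k hk
    have hkF : k⁻¹ • x ∈ μ ⁻¹' {μ x} := by
      rw [mem_preimage, mem_singleton_iff, hequiv, inv_smul_eq_iff]
      exact hk
    exact (hUF.symm.subset ⟨hkF, mem_orbit_of_mem_orbit _ (mem_orbit_self x)⟩).2
  · rintro y ⟨hyV, k, hk⟩
    have hkF : k⁻¹ • y ∈ μ ⁻¹' {μ x} := by simp [hequiv, ← hk]
    simpa using mem_orbit_of_mem_orbit k (hUF.subset ⟨hkF, hyV k hk.symm⟩).2
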